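/- arXiv:0706.2516 — 5 statements merged into one kernel-verified Lean document; each statement's English description precedes it below -/
import Mathlib

section
/- A finite directed simple graph G = (V, A) without loops is a pedigree if and only if the following three conditions hold: (i) G is acyclic, (ii) the mate graph M(G) is bipartite, and (iii) no vertex of G has exactly one incoming arc. -/
/-!
In a pedigree with sexes `M` and `F`, two distinct parents of a common child are one from `M`
and one from `F`, so `(M, F)` bipartitions the mate graph, and a vertex with a unique parent
would need that parent in both `M` and `F`. Conversely, given a bipartition `(M, Mᶜ)` of the mate
graph, the parents of any vertex are pairwise adjacent in it; a bipartite graph has no triangle,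
so a vertex with at least two parents has exactly two, lying on opposite sides.
-/

/-- The mate graph `M(G)` of a directed graph `G` given by arc relation `A`:
distinct vertices `u` and `v` are adjacent iff they have a common child. -/
def mateGraph {V : Type*} (A : V → V → Prop) : SimpleGraph V where
  Adj u v := u ≠ v ∧ ∃ w, A u w ∧ A v w
  symm := by
    constructor
    intro u v h
    exact ⟨h.1.symm, h.2.imp fun w hw => ⟨hw.2, hw.1⟩⟩
  loopless := by
    constructor
    intro u h
    exact h.1 rfl

/-- A directed acyclic graph is a pedigree if its vertex set splits into disjoint sets
`M` and `F` such that every vertex either has no incoming arc, or exactly two incoming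
arcs, one from a vertex of `M` and one from a vertex of `F`. -/
def IsPedigree {V : Type*} (A : V → V → Prop) : Prop :=
  (∀ v, ¬ Relation.TransGen A v v) ∧
  ∃ M F : Set V, Disjoint M F ∧ M ∪ F = Set.univ ∧
    ∀ x : V, (∀ u, ¬ A u x) ∨
      ∃ u v : V, u ∈ M ∧ v ∈ F ∧ A u x ∧ A v x ∧ ∀ w, A w x → w = u ∨ w = v

namespace SimpleGraph

variable {V : Type*} {G : SimpleGraph V} {s t : Set V} {u v w : V}

theorem IsBipartiteWith.isBipartiteWith_compl (h : G.IsBipartiteWith s t) :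
    G.IsBipartiteWith s sᶜ where
  disjoint := disjoint_compl_right
  mem_of_adj _ _ hadj := (h.mem_of_adj hadj).imp
    (And.imp_right fun hv => h.disjoint.subset_compl_left hv)
    (And.imp_left fun hu => h.disjoint.subset_compl_left hu)

theorem IsBipartiteWith.mem_iff_notMem_of_adj (h : G.IsBipartiteWith s sᶜ) (hadj : G.Adj u v) :
    u ∈ s ↔ v ∉ s := by
  rcases h.mem_of_adj hadj with ⟨hu, hv⟩ | ⟨hu, hv⟩ <;> simp_all

theorem IsBipartiteWith.not_triangle (h : G.IsBipartiteWith s sᶜ) (huv : G.Adj u v)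
    (hvw : G.Adj v w) (huw : G.Adj u w) : False := by
  have := h.mem_iff_notMem_of_adj huv
  have := h.mem_iff_notMem_of_adj hvw
  have := h.mem_iff_notMem_of_adj huw
  tauto

end SimpleGraph

section Pedigree

variable {V : Type*} {A : V → V → Prop} {M F : Set V} {x : V}

/-- The clause of `IsPedigree` on a single vertex `x`. -/
def HasPedigreeParents (A : V → V → Prop) (M F : Set V) (x : V) : Prop :=
  (∀ u, ¬ A u x) ∨ ∃ u v, u ∈ M ∧ v ∈ F ∧ A u x ∧ A v x ∧ ∀ w, A w x → w = u ∨ w = v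

theorem mateGraph_isBipartiteWith (hMF : Disjoint M F) (hA : ∀ x, HasPedigreeParents A M F x) :
    (mateGraph A).IsBipartiteWith M F where
  disjoint := hMF
  mem_of_adj u v := by
    rintro ⟨huv, x, hu, hv⟩
    rcases hA x with hx | ⟨p, q, hp, hq, -, -, hpq⟩
    · exact absurd hu (hx u)
    · rcases hpq u hu with rfl | rfl <;> rcases hpq v hv with rfl | rfl <;> tauto

theorem HasPedigreeParents.not_existsUnique (hMF : Disjoint M F)
    (hx : HasPedigreeParents A M F x) : ¬ ∃! u, A u x := by
  rintro ⟨u, hu, huniq⟩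
  rcases hx with hx | ⟨p, q, hp, hq, hpx, hqx, -⟩
  · exact hx u hu
  · exact Set.disjoint_left.mp hMF hp ((huniq p hpx).trans (huniq q hqx).symm ▸ hq)

theorem hasPedigreeParents_of_isBipartiteWith (h : (mateGraph A).IsBipartiteWith M Mᶜ)
    (hx : ¬ ∃! u, A u x) : HasPedigreeParents A M Mᶜ x := by
  by_cases hfounder : ¬ ∃ u, A u x
  · exact .inl (not_exists.mp hfounder)
  obtain ⟨u, hu⟩ := not_not.mp hfounder
  obtain ⟨v, hv, hvu⟩ : ∃ v, A v x ∧ v ≠ u := by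
    by_contra! hall
    exact hx ⟨u, hu, hall⟩
  have hadj {w w' : V} (hw : A w x) (hw' : A w' x) (hne : w ≠ w') : (mateGraph A).Adj w w' :=
    ⟨hne, x, hw, hw'⟩
  have huv := hadj hu hv hvu.symm
  have hparents : ∀ w, A w x → w = u ∨ w = v := by
    intro w hw
    by_contra! hne
    exact h.not_triangle (hadj hw hu hne.1) huv (hadj hw hv hne.2)
  by_cases huM : u ∈ M
  · exact .inr ⟨u, v, huM, (h.mem_iff_notMem_of_adj huv).mp huM, hu, hv, hparents⟩
  · exact .inr ⟨v, u, (h.mem_iff_notMem_of_adj huv.symm).mpr huM, huM, hv, hu,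
      fun w hw => (hparents w hw).symm⟩

end Pedigree

theorem isPedigree_iff_general {V : Type*} (A : V → V → Prop) :
    IsPedigree A ↔
      ((∀ v, ¬ Relation.TransGen A v v) ∧
       (mateGraph A).Colorable 2 ∧
       ∀ x : V, ¬ (∃! u, A u x)) := by
  constructor
  · rintro ⟨hacyc, M, F, hMF, -, hA⟩
    exact ⟨hacyc, (mateGraph_isBipartiteWith hMF hA).isBipartite,
      fun x => HasPedigreeParents.not_existsUnique hMF (hA x)⟩
  · rintro ⟨hacyc, hbip, hA⟩
    obtain ⟨M, F, hMF⟩ := SimpleGraph.IsBipartite.exists_isBipartiteWith hbip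
    exact ⟨hacyc, M, Mᶜ, disjoint_compl_right, Set.union_compl_self M,
      fun x => hasPedigreeParents_of_isBipartiteWith hMF.isBipartiteWith_compl (hA x)⟩

/-- A finite directed simple loopless graph `G` is a pedigree if and only if
(i) `G` is acyclic, (ii) the mate graph `M(G)` is bipartite, and
(iii) no vertex of `G` has exactly one incoming arc. -/
theorem isPedigree_iff {V : Type*} [Fintype V] (A : V → V → Prop)
    (hloopless : ∀ v, ¬ A v v) :
    IsPedigree A ↔
      ((∀ v, ¬ Relation.TransGen A v v) ∧
       (mateGraph A).Colorable 2 ∧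
       ∀ x : V, ¬ (∃! u, A u x)) :=
  isPedigree_iff_general A
end

section
/- For every n ≥ 2, the number f(n, 1) of isomorphism classes of simple pedigrees of depth 1 with constant population size n satisfies 2 · f(n, 1) ≥ (n − 1) · n^(n−2). -/
/-!
Label the founders by `Fin n` and give extant vertex `j` the founders `j` and `f j`. If `f` has
no fixed point and its functional graph is a tree whose root edge is doubled into a `2`-cycle
`{a, f a}`, this is a pedigree: the founder graph is two-coloured by the parity of the distance
to `a`. An isomorphism between two such pedigrees restricts to an injection `σ` of the founders
with `{σ j, σ (f j)} = {j, f' j}`; a point moved by `σ` satisfies `σ (f j) = j`, and following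
`f` down to the `2`-cycle shows that `σ` is the identity or the swap of the roots. So an
isomorphism class contains at most two such `f`, and a Prüfer-type decoding injects
`(n - 1) n ^ (n - 2)` codes into them.
-/

/-- A simple pedigree of depth `d` with constant population size `n`: the vertex set is
the disjoint union of generations `X_0, …, X_d` (generation `i` being `{i} × Fin n`),
every arc goes from `X_i` to `X_{i-1}`, and there are disjoint sets `M` and `F` covering
the vertex set such that every vertex of `X_i` with `i < d` has exactly two parents,
one in `M` and one in `F` (vertices of `X_d`, the founders, have none by the level
condition). -/
structure SimplePedigree (n d : ℕ) where
  A : Fin (d + 1) × Fin n → Fin (d + 1) × Fin n → Prop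
  arc_level : ∀ u v, A u v → (u.1 : ℕ) = (v.1 : ℕ) + 1
  parents : ∃ M F : Set (Fin (d + 1) × Fin n), Disjoint M F ∧ M ∪ F = Set.univ ∧
    ∀ x : Fin (d + 1) × Fin n, (x.1 : ℕ) < d →
      ∃ u v, u ∈ M ∧ v ∈ F ∧ A u x ∧ A v x ∧ ∀ w, A w x → w = u ∨ w = v

/-- Two simple pedigrees on the same labelled extant set `X_0` are isomorphic if there
is a digraph isomorphism between them fixing each extant vertex. -/
def PedigreeIso {n d : ℕ} (P Q : SimplePedigree n d) : Prop :=
  ∃ φ : (Fin (d + 1) × Fin n) ≃ (Fin (d + 1) × Fin n),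
    (∀ u v, P.A u v ↔ Q.A (φ u) (φ v)) ∧
    ∀ j : Fin n, φ ((0 : Fin (d + 1)), j) = ((0 : Fin (d + 1)), j)


open Finset Function

namespace Function

variable {α : Type*} {f f' σ : α → α} {a : α}

/-- `reparent σ f` is the unique `f'` with `{σ j, σ (f j)} = {j, f' j}` for all `j`, when `σ`
is injective and `f` has no fixed point. -/
def reparent [DecidableEq α] (σ f : α → α) (j : α) : α := if σ j = j then σ (f j) else σ j

lemma reparent_id [DecidableEq α] (f : α → α) : reparent id f = f := by
  funext j
  simp [reparent]

lemma exists_bool_apply_ne_of_iterate_eq (hreach : ∀ v, ∃ p, f^[p] v = a) (hfa : f a ≠ a)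
    (hffa : f (f a) = a) : ∃ χ : α → Bool, ∀ v, χ (f v) ≠ χ v := by
  classical
  let depth v := Nat.find (hreach v)
  have depth_a : depth a = 0 := Nat.find_eq_zero _ |>.2 rfl
  have depth_fa : depth (f a) = 1 := by
    exact le_antisymm (Nat.find_le hffa) (Nat.find_pos _ |>.2 hfa)
  have depth_succ : ∀ v ≠ a, depth v = depth (f v) + 1 := fun v hv =>
    Nat.find_comp_succ (hreach v) (hreach (f v)) hv
  refine ⟨fun v => decide (Even (depth v)), fun v => ?_⟩
  by_cases hv : v = a
  · subst hv
    simp [depth_a, depth_fa]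
  · simp only [depth_succ v hv, ne_eq, decide_eq_decide, Nat.even_add_one]
    exact iff_not_self

section ParentsIff

variable (hf : ∀ v, f v ≠ v) (hσ : Injective σ)
  (h : ∀ u j, (u = j ∨ u = f j) ↔ (σ u = j ∨ σ u = f' j))
include hf hσ h

lemma eq_reparent_of_parents_iff [DecidableEq α] : f' = reparent σ f := by
  funext j
  unfold reparent
  split_ifs with hj
  · exact (((h (f j) j).1 (Or.inr rfl)).resolve_left fun h' => hf j (hσ (h'.trans hj.symm))).symm
  · exact (((h j j).1 (Or.inl rfl)).resolve_left hj).symm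

lemma apply_apply_eq_of_parents_iff {j : α} (hj : σ j ≠ j) : σ (f j) = j := by
  have hj' : σ j = f' j := ((h j j).1 (Or.inl rfl)).resolve_left hj
  exact ((h (f j) j).1 (Or.inr rfl)).resolve_right fun h' => hf j (hσ (h'.trans hj'.symm))

lemma apply_eq_and_apply_apply_eq_of_parents_iff (hffa : f (f a) = a)
    (ha : σ a ≠ a ∨ σ (f a) ≠ f a) :
    σ a = f a ∧ σ (f a) = a := by
  have moved : ∀ {j}, σ j ≠ j → σ (f j) = j := apply_apply_eq_of_parents_iff hf hσ h
  have key : σ (f a) ≠ f a → σ a = f a := fun hfa => by simpa [hffa] using moved hfa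
  rcases ha with ha | ha
  · exact ⟨key ((moved ha).trans_ne (hf a).symm), moved ha⟩
  · exact ⟨key ha, moved ((key ha).trans_ne (hf a))⟩

variable (hffa : f (f a) = a) (hreach : ∀ v, ∃ p, f^[p] v = a)
include hffa hreach

lemma eq_or_eq_of_parents_iff {v : α} (hv : σ v ≠ v) : v = a ∨ v = f a := by
  obtain ⟨p, hp⟩ := hreach v
  induction p generalizing v with
  | zero => exact Or.inl hp
  | succ p ih =>
    have hfv : σ (f v) = v := apply_apply_eq_of_parents_iff hf hσ h hv
    have hfv_moved : σ (f v) ≠ f v := hfv.trans_ne (hf v).symm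
    have hpair := apply_eq_and_apply_apply_eq_of_parents_iff hf hσ h hffa
    rcases ih hfv_moved hp with hfv_eq | hfv_eq <;> rw [hfv_eq] at hfv hfv_moved
    · exact Or.inr (hfv.symm.trans (hpair (Or.inl hfv_moved)).1)
    · exact Or.inl (hfv.symm.trans (hpair (Or.inr hfv_moved)).2)

lemma eq_id_or_eq_swap_of_parents_iff [DecidableEq α] : σ = id ∨ σ = Equiv.swap a (f a) := by
  have hmoved : ∀ {v}, σ v ≠ v → v = a ∨ v = f a := eq_or_eq_of_parents_iff hf hσ h hffa hreach
  by_cases ha : σ a = a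
  · left
    have hfa : σ (f a) = f a := by
      by_contra hfa
      exact hf a ((apply_eq_and_apply_apply_eq_of_parents_iff hf hσ h hffa (Or.inr hfa)).1 ▸ ha)
    funext v
    by_contra hv
    rcases hmoved hv with rfl | rfl <;> contradiction
  · right
    obtain ⟨hσa, hσfa⟩ := apply_eq_and_apply_apply_eq_of_parents_iff hf hσ h hffa (Or.inl ha)
    funext v
    rw [Equiv.swap_apply_def]
    split_ifs with hva hvfa
    · rwa [hva]
    · rwa [hvfa]
    · by_contra hv
      rcases hmoved hv with rfl | rfl <;> contradiction

end ParentsIff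

end Function

lemma PedigreeIso.equivalence (n d : ℕ) : Equivalence (@PedigreeIso n d) where
  refl _ := ⟨Equiv.refl _, fun _ _ => Iff.rfl, fun _ => rfl⟩
  symm := by
    rintro P Q ⟨φ, hA, hfix⟩
    refine ⟨φ.symm, fun u v => ?_, fun j => φ.symm_apply_eq.2 (hfix j).symm⟩
    simpa using (hA (φ.symm u) (φ.symm v)).symm
  trans := by
    rintro P Q R ⟨φ, hA, hfix⟩ ⟨ψ, hA', hfix'⟩
    exact ⟨φ.trans ψ, fun u v => (hA u v).trans (hA' _ _), fun j => by simp [hfix, hfix']⟩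

namespace SimplePedigree

instance (n d : ℕ) : Finite (SimplePedigree n d) :=
  Finite.of_injective SimplePedigree.A fun P Q h => by cases P; cases Q; congr

def ofFun {n : ℕ} (f : Fin n → Fin n) (hf : ∃ χ : Fin n → Bool, ∀ v, χ (f v) ≠ χ v) :
    SimplePedigree n 1 where
  A u x := u.1 = 1 ∧ x.1 = 0 ∧ (u.2 = x.2 ∨ u.2 = f x.2)
  arc_level u v h := by simp [h.1, h.2.1]
  parents := by
    obtain ⟨χ, hχ⟩ := hf
    refine ⟨{x | x.1 = 0 ∨ χ x.2}, {x | x.1 = 0 ∨ χ x.2}ᶜ, disjoint_compl_right,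
      Set.union_compl_self _, fun x hx1 => ?_⟩
    have hx0 : x.1 = 0 := Fin.ext (by simpa using hx1)
    have parent_iff : ∀ w : Fin 2 × Fin n, w.1 = 1 ∧ x.1 = 0 ∧ (w.2 = x.2 ∨ w.2 = f x.2) ↔
        w = (1, x.2) ∨ w = (1, f x.2) := by
      rintro ⟨w₁, w₂⟩
      simp only [hx0, Prod.mk.injEq, true_and]
      tauto
    cases hx : χ x.2
    · refine ⟨(1, f x.2), (1, x.2), ?_, ?_, (parent_iff _).2 (Or.inr rfl),
        (parent_iff _).2 (Or.inl rfl), fun w hw => ((parent_iff w).1 hw).symm⟩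
      · simpa [hx] using hχ x.2
      · simp [hx]
    · refine ⟨(1, x.2), (1, f x.2), ?_, ?_, (parent_iff _).2 (Or.inl rfl),
        (parent_iff _).2 (Or.inr rfl), fun w hw => (parent_iff w).1 hw⟩
      · simp [hx]
      · simpa [hx] using hχ x.2

lemma exists_injective_parents_iff_of_pedigreeIso {n : ℕ} {f f' : Fin n → Fin n}
    {hf : ∃ χ : Fin n → Bool, ∀ v, χ (f v) ≠ χ v} {hf' : ∃ χ : Fin n → Bool, ∀ v, χ (f' v) ≠ χ v}
    (h : PedigreeIso (ofFun f hf) (ofFun f' hf')) :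
    ∃ σ : Fin n → Fin n, Injective σ ∧ ∀ u j, (u = j ∨ u = f j) ↔ (σ u = j ∨ σ u = f' j) := by
  obtain ⟨φ, hA, hfix⟩ := h
  -- `φ` fixes the extant generation pointwise, so it maps founders to founders.
  have hlev : ∀ i, (φ (1, i)).1 = 1 := fun i => Fin.eq_one_of_ne_zero _ fun h0 => by
    have : φ (1, i) = φ (0, (φ (1, i)).2) := by rw [hfix]; exact Prod.ext h0 rfl
    simpa using congrArg Prod.fst (φ.injective this)
  have hφ : ∀ i, φ (1, i) = (1, (φ (1, i)).2) := fun i => Prod.ext (hlev i) rfl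
  refine ⟨fun i => (φ (1, i)).2, fun i j hij => ?_, fun u j => ?_⟩
  · simpa using φ.injective (Prod.ext ((hlev i).trans (hlev j).symm) hij)
  · have := hA (1, u) (0, j)
    rw [hfix, hφ] at this
    simpa [ofFun] using this

end SimplePedigree

/-- `(r, i, s)` encodes the root pair `r`, `r.succAbove i` and the Prüfer word `s`. -/
abbrev PruferCode (m : ℕ) := Fin (m + 3) × Fin (m + 2) × (Fin m → Fin (m + 3))

namespace PruferCode

variable {m : ℕ} (c : PruferCode m) {k : ℕ} {v : Fin (m + 3)}

def root : Fin (m + 3) := c.1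

def root' : Fin (m + 3) := c.1.succAbove c.2.1

lemma root'_ne_root : c.root' ≠ c.root := Fin.succAbove_ne _ _

/-- The last leaf is attached to `root`. -/
def word (i : ℕ) : Fin (m + 3) := if h : i < m then c.2.2 ⟨i, h⟩ else c.root

lemma word_self : c.word m = c.root := by simp [word]

lemma word_of_lt {i : ℕ} (hi : i < m) : c.word i = c.2.2 ⟨i, hi⟩ := dif_pos hi

def candidates (k : ℕ) (S : Finset (Fin (m + 3))) : Finset (Fin (m + 3)) :=
  univ \ insert c.root' (S ∪ (Icc k m).image c.word)

lemma mem_candidates {S : Finset (Fin (m + 3))} :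
    v ∈ c.candidates k S ↔ v ≠ c.root' ∧ v ∉ S ∧ ∀ i ∈ Icc k m, c.word i ≠ v := by
  simp [candidates]

lemma candidates_nonempty {S : Finset (Fin (m + 3))} (hk : k ≤ m) (hS : #S ≤ k) :
    (c.candidates k S).Nonempty := by
  refine sdiff_nonempty_of_card_lt_card ?_
  have := card_insert_le c.root' (S ∪ (Icc k m).image c.word)
  have := card_union_le S ((Icc k m).image c.word)
  have := card_image_le (s := Icc k m) (f := c.word)
  simp only [card_univ, Fintype.card_fin, Nat.card_Icc] at *
  omega

def pickMin {α : Type*} [LinearOrder α] [Inhabited α] (s : Finset α) : α :=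
  if h : s.Nonempty then s.min' h else default

lemma pickMin_mem {α : Type*} [LinearOrder α] [Inhabited α] {s : Finset α} (h : s.Nonempty) :
    pickMin s ∈ s := by
  simpa [pickMin, h] using s.min'_mem h

def pruned : ℕ → Finset (Fin (m + 3))
  | 0 => ∅
  | k + 1 => insert (pickMin (c.candidates k (pruned k))) (pruned k)

def leaf (k : ℕ) : Fin (m + 3) := pickMin (c.candidates k (c.pruned k))

lemma pruned_succ : c.pruned (k + 1) = insert (c.leaf k) (c.pruned k) := rfl

lemma mem_pruned : v ∈ c.pruned k ↔ ∃ j < k, c.leaf j = v := by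
  induction k with
  | zero => simp [pruned]
  | succ k ih =>
    simp only [pruned_succ, mem_insert, ih, Nat.lt_add_one_iff_lt_or_eq]
    aesop

lemma card_pruned_le : #(c.pruned k) ≤ k := by
  induction k with
  | zero => simp [pruned]
  | succ k ih => exact (card_insert_le _ _).trans (by omega)

lemma leaf_mem_candidates (hk : k ≤ m) : c.leaf k ∈ c.candidates k (c.pruned k) :=
  pickMin_mem (c.candidates_nonempty hk c.card_pruned_le)

lemma leaf_ne_root' (hk : k ≤ m) : c.leaf k ≠ c.root' :=
  (c.mem_candidates.1 (c.leaf_mem_candidates hk)).1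

lemma leaf_notMem_pruned (hk : k ≤ m) : c.leaf k ∉ c.pruned k :=
  (c.mem_candidates.1 (c.leaf_mem_candidates hk)).2.1

lemma word_ne_leaf {i : ℕ} (hki : k ≤ i) (him : i ≤ m) : c.word i ≠ c.leaf k :=
  (c.mem_candidates.1 (c.leaf_mem_candidates (hki.trans him))).2.2 i (mem_Icc.2 ⟨hki, him⟩)

lemma leaf_ne_root (hk : k ≤ m) : c.leaf k ≠ c.root :=
  c.word_self ▸ (c.word_ne_leaf hk le_rfl).symm

lemma leaf_injOn : Set.InjOn c.leaf (Set.Iic m) := by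
  intro j hj k hk h
  by_contra hne
  rcases lt_or_gt_of_ne hne with hlt | hlt
  · exact c.leaf_notMem_pruned hk (c.mem_pruned.2 ⟨j, hlt, h⟩)
  · exact c.leaf_notMem_pruned hj (c.mem_pruned.2 ⟨k, hlt, h.symm⟩)

lemma exists_leaf_eq (h : v ≠ c.root) (h' : v ≠ c.root') : ∃ k ≤ m, c.leaf k = v := by
  have hsub : (range (m + 1)).image c.leaf ⊆ univ \ {c.root, c.root'} := by
    intro w hw
    obtain ⟨k, hk, rfl⟩ := mem_image.1 hw
    have hk : k ≤ m := Nat.lt_add_one_iff.1 (mem_range.1 hk)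
    simp [c.leaf_ne_root hk, c.leaf_ne_root' hk]
  have hcard : #(univ \ {c.root, c.root'}) ≤ #((range (m + 1)).image c.leaf) := by
    rw [card_image_of_injOn (c.leaf_injOn.mono fun k hk => Nat.lt_add_one_iff.1 (mem_range.1 hk)),
      card_sdiff_of_subset (subset_univ _), card_pair c.root'_ne_root.symm]
    simp
  have hv : v ∈ (range (m + 1)).image c.leaf := by
    rw [eq_of_subset_of_card_le hsub hcard]
    simp [h, h']
  obtain ⟨k, hk, hkv⟩ := mem_image.1 hv
  exact ⟨k, Nat.lt_add_one_iff.1 (mem_range.1 hk), hkv⟩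

open scoped Classical in
noncomputable def toFun (v : Fin (m + 3)) : Fin (m + 3) :=
  if h : ∃ k ≤ m, c.leaf k = v then c.word (Nat.find h)
  else if v = c.root then c.root' else c.root

lemma toFun_leaf (hk : k ≤ m) : c.toFun (c.leaf k) = c.word k := by
  have h : ∃ j ≤ m, c.leaf j = c.leaf k := ⟨k, hk, rfl⟩
  obtain ⟨hle, heq⟩ := Nat.find_spec h
  rw [toFun, dif_pos h, c.leaf_injOn hle hk heq]

lemma toFun_root : c.toFun c.root = c.root' := by
  rw [toFun, dif_neg fun ⟨k, hk, h⟩ => c.leaf_ne_root hk h, if_pos rfl]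

lemma toFun_root' : c.toFun c.root' = c.root := by
  rw [toFun, dif_neg fun ⟨k, hk, h⟩ => c.leaf_ne_root' hk h, if_neg c.root'_ne_root]

lemma word_eq_root_or_root'_or_leaf (hk : k ≤ m) :
    c.word k = c.root ∨ c.word k = c.root' ∨ ∃ j, k < j ∧ j ≤ m ∧ c.word k = c.leaf j := by
  by_cases h : c.word k = c.root
  · exact Or.inl h
  by_cases h' : c.word k = c.root'
  · exact Or.inr (Or.inl h')
  obtain ⟨j, hj, hjk⟩ := c.exists_leaf_eq h h'
  exact Or.inr (Or.inr ⟨j, lt_of_not_ge fun hjk' => c.word_ne_leaf hjk' hk hjk.symm, hj, hjk.symm⟩)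

lemma toFun_ne_self (v : Fin (m + 3)) : c.toFun v ≠ v := by
  by_cases h : v = c.root
  · rw [h, toFun_root]
    exact c.root'_ne_root
  by_cases h' : v = c.root'
  · rw [h', toFun_root']
    exact c.root'_ne_root.symm
  obtain ⟨k, hk, rfl⟩ := c.exists_leaf_eq h h'
  rw [c.toFun_leaf hk]
  exact c.word_ne_leaf le_rfl hk

lemma exists_iterate_toFun_leaf_eq_root (hk : k ≤ m) : ∃ p, c.toFun^[p] (c.leaf k) = c.root := by
  induction hd : m - k using Nat.strong_induction_on generalizing k with
  | _ d ih =>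
    rcases c.word_eq_root_or_root'_or_leaf hk with h | h | ⟨j, hkj, hj, h⟩
    · exact ⟨1, by rw [iterate_one, c.toFun_leaf hk, h]⟩
    · exact ⟨2, by rw [iterate_succ_apply, iterate_one, c.toFun_leaf hk, h, toFun_root']⟩
    · obtain ⟨p, hp⟩ := ih (m - j) (by omega) hj rfl
      exact ⟨p + 1, by rw [iterate_succ_apply, c.toFun_leaf hk, h, hp]⟩

lemma exists_iterate_toFun_eq_root (v : Fin (m + 3)) : ∃ p, c.toFun^[p] v = c.root := by
  by_cases h : v = c.root
  · exact ⟨0, h⟩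
  by_cases h' : v = c.root'
  · exact ⟨1, by rw [iterate_one, h', toFun_root']⟩
  obtain ⟨k, hk, rfl⟩ := c.exists_leaf_eq h h'
  exact c.exists_iterate_toFun_leaf_eq_root hk

lemma toFun_toFun_eq_self_iff : c.toFun (c.toFun v) = v ↔ v = c.root ∨ v = c.root' := by
  refine ⟨fun hv => ?_, ?_⟩
  · by_contra! h
    obtain ⟨k, hk, rfl⟩ := c.exists_leaf_eq h.1 h.2
    rw [c.toFun_leaf hk] at hv
    rcases c.word_eq_root_or_root'_or_leaf hk with hw | hw | ⟨j, hkj, hj, hw⟩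
    · exact c.leaf_ne_root' hk (by rw [← hv, hw, toFun_root])
    · exact c.leaf_ne_root hk (by rw [← hv, hw, toFun_root'])
    · rw [hw, c.toFun_leaf hj] at hv
      rcases c.word_eq_root_or_root'_or_leaf hj with hw' | hw' | ⟨i, hji, hi, hw'⟩
      · exact c.leaf_ne_root hk (hv ▸ hw')
      · exact c.leaf_ne_root' hk (hv ▸ hw')
      · exact (by omega : i ≠ k) (c.leaf_injOn hi hk (hw' ▸ hv))
  · rintro (rfl | rfl)
    · rw [toFun_root, toFun_root']
    · rw [toFun_root', toFun_root]

lemma toFun_toFun_root : c.toFun (c.toFun c.root) = c.root :=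
  c.toFun_toFun_eq_self_iff.2 (Or.inl rfl)

lemma leaf_notMem_pruned_iff {i : ℕ} (hi : i ≤ m) : c.leaf i ∉ c.pruned k ↔ k ≤ i := by
  rw [mem_pruned, not_exists]
  refine ⟨fun h => le_of_not_gt fun hik => h i ⟨hik, rfl⟩, fun hki j ⟨hjk, hj⟩ => ?_⟩
  exact (by omega : j ≠ i) (c.leaf_injOn (by simp; omega) hi hj)

/-- The candidates can be read off `toFun`, which makes the decoding injective. -/
lemma mem_candidates_pruned_iff (hk : k ≤ m) :
    v ∈ c.candidates k (c.pruned k) ↔ c.toFun (c.toFun v) ≠ v ∧ v ∉ c.pruned k ∧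
      ∀ w, c.toFun (c.toFun w) ≠ w → w ∉ c.pruned k → c.toFun w ≠ v := by
  simp only [ne_eq, toFun_toFun_eq_self_iff]
  have hsuffix : (∀ i ∈ Icc k m, c.word i ≠ v) ↔
      ∀ w, ¬(w = c.root ∨ w = c.root') → w ∉ c.pruned k → c.toFun w ≠ v := by
    refine ⟨fun h w hw hwk => ?_, fun h i hi => ?_⟩
    · obtain ⟨i, hi, rfl⟩ := c.exists_leaf_eq (not_or.1 hw).1 (not_or.1 hw).2
      rw [c.toFun_leaf hi]
      exact h i (mem_Icc.2 ⟨(c.leaf_notMem_pruned_iff hi).1 hwk, hi⟩)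
    · obtain ⟨hki, him⟩ := mem_Icc.1 hi
      have := h (c.leaf i) (by simp [c.leaf_ne_root him, c.leaf_ne_root' him])
        ((c.leaf_notMem_pruned_iff him).2 hki)
      rwa [c.toFun_leaf him] at this
  rw [mem_candidates, ← hsuffix]
  constructor
  · rintro ⟨h', hS, hw⟩
    exact ⟨not_or.2 ⟨fun h => hw m (mem_Icc.2 ⟨hk, le_rfl⟩) (c.word_self.trans h.symm), h'⟩, hS, hw⟩
  · rintro ⟨h, hS, hw⟩
    exact ⟨(not_or.1 h).2, hS, hw⟩

section Reconstruction

variable {c} {c' : PruferCode m}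

lemma leaf_eq_of_toFun_eq (h : c.toFun = c'.toFun) (hk : k ≤ m)
    (hP : c.pruned k = c'.pruned k) : c.leaf k = c'.leaf k := by
  have : c.candidates k (c.pruned k) = c'.candidates k (c'.pruned k) := by
    ext v
    rw [c.mem_candidates_pruned_iff hk, c'.mem_candidates_pruned_iff hk, h, hP]
  exact congrArg pickMin this

lemma pruned_eq_of_toFun_eq (h : c.toFun = c'.toFun) (hk : k ≤ m) : c.pruned k = c'.pruned k := by
  induction k with
  | zero => rfl
  | succ k ih =>
    have hP := ih (by omega)
    rw [pruned_succ, pruned_succ, leaf_eq_of_toFun_eq h (by omega) hP, hP]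

lemma toFun_injective : Injective (toFun : PruferCode m → Fin (m + 3) → Fin (m + 3)) := by
  intro c c' h
  have hword {k : ℕ} (hk : k ≤ m) : c.word k = c'.word k := by
    rw [← c.toFun_leaf hk, ← c'.toFun_leaf hk, h,
      leaf_eq_of_toFun_eq h hk (pruned_eq_of_toFun_eq h hk)]
  have hroot : c.root = c'.root := by rw [← c.word_self, ← c'.word_self, hword le_rfl]
  have hroot' : c.root' = c'.root' := by rw [← c.toFun_root, ← c'.toFun_root, h, hroot]
  obtain ⟨r, i, s⟩ := c
  obtain ⟨r', i', s'⟩ := c'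
  obtain rfl : r = r' := hroot
  obtain rfl : i = i' := Fin.succAbove_right_injective hroot'
  obtain rfl : s = s' := funext fun j => by simpa [word_of_lt] using hword j.2.le
  rfl

end Reconstruction

noncomputable def pedigree (c : PruferCode m) : SimplePedigree (m + 3) 1 :=
  SimplePedigree.ofFun c.toFun
    (exists_bool_apply_ne_of_iterate_eq c.exists_iterate_toFun_eq_root (c.toFun_ne_self _)
      c.toFun_toFun_root)

-- An isomorphism of pedigrees can only exchange the two roots.
lemma toFun_eq_or_eq_of_pedigreeIso {c c' : PruferCode m} (h : PedigreeIso c.pedigree c'.pedigree) :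
    c'.toFun = c.toFun ∨ c'.toFun = reparent (Equiv.swap c.root c.root') c.toFun := by
  obtain ⟨σ, hσ, hparents⟩ := SimplePedigree.exists_injective_parents_iff_of_pedigreeIso h
  rw [eq_reparent_of_parents_iff c.toFun_ne_self hσ hparents]
  rcases eq_id_or_eq_swap_of_parents_iff c.toFun_ne_self hσ hparents c.toFun_toFun_root
    c.exists_iterate_toFun_eq_root with rfl | rfl
  · exact Or.inl (reparent_id _)
  · exact Or.inr (by rw [toFun_root])

lemma card_eq : Nat.card (PruferCode m) = (m + 2) * (m + 3) ^ (m + 1) := by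
  rw [Nat.card_eq_fintype_card]
  simp only [Fintype.card_prod, Fintype.card_pi, Fintype.card_fin, prod_const, card_univ]
  ring

lemma card_le_two_mul_card_quot_pedigreeIso :
    Nat.card (PruferCode m) ≤ 2 * Nat.card (Quot (@PedigreeIso (m + 3) 1)) := by
  classical
  have : Fintype (Quot (@PedigreeIso (m + 3) 1)) := Fintype.ofFinite _
  let F (c : PruferCode m) : Quot (@PedigreeIso (m + 3) 1) := Quot.mk _ c.pedigree
  rw [Nat.card_eq_fintype_card, Nat.card_eq_fintype_card, ← card_univ, ← card_univ]
  refine card_le_mul_card_image_of_maps_to (f := F) (fun _ _ => mem_univ _) 2 fun q _ => ?_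
  rcases eq_empty_or_nonempty {c | F c = q} with hq | ⟨c₀, hc₀⟩
  · simp [hq]
  calc #{c | F c = q}
      ≤ #{c₀.toFun, reparent (Equiv.swap c₀.root c₀.root') c₀.toFun} := by
        refine card_le_card_of_injOn toFun (fun c hc => ?_) toFun_injective.injOn
        have hF : F c₀ = F c := (mem_filter.1 hc₀).2.trans (mem_filter.1 hc).2.symm
        have := (Equivalence.eqvGen_iff (PedigreeIso.equivalence _ _)).1 (Quot.eq.1 hF)
        simpa using toFun_eq_or_eq_of_pedigreeIso this
    _ ≤ 2 := card_le_two

end PruferCode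

/-- For every `n ≥ 2`, the number `f(n,1)` of isomorphism classes of simple pedigrees of
depth `1` with constant population size `n` satisfies `2 * f(n,1) ≥ (n-1) * n^(n-2)`. -/
theorem f_n_one_lower_bound (n : ℕ) (hn : 2 ≤ n) :
    (n - 1) * n ^ (n - 2) ≤ 2 * Nat.card (Quot (@PedigreeIso n 1)) := by
  obtain rfl | hn := hn.eq_or_lt
  · have : Nonempty (Quot (@PedigreeIso 2 1)) :=
      ⟨Quot.mk _ (SimplePedigree.ofFun (fun v => v + 1) ⟨fun v => v = 0, by decide⟩)⟩
    have := Nat.card_pos (α := Quot (@PedigreeIso 2 1))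
    norm_num
    omega
  obtain ⟨m, rfl⟩ := Nat.exists_eq_add_of_le' hn
  rw [show m + 3 - 1 = m + 2 by omega, show m + 3 - 2 = m + 1 by omega, ← PruferCode.card_eq]
  exact PruferCode.card_le_two_mul_card_quot_pedigreeIso
end

section
/- For every n ≥ 2 and every d ≥ 1, the number f(n, d) of isomorphism classes of simple pedigrees of depth d with constant population size n satisfies 2^d · f(n, d) ≥ (n − 1)^d · n^(d(n−2)). -/
/-!
Call `g : Fin n → Fin n` a two-cycle tree if its functional graph is connected and its only
cycle is a 2-cycle `u ⇄ v`. These are the labelled trees with a marked edge, so there are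
`(n - 1) n ^ (n - 2)` of them; we exhibit them through Joyal's bijection, which strings the
cycles of an arbitrary map, written in one-line notation, along a path. A tuple `s` of `d`
two-cycle trees defines a pedigree in which vertex `j` of generation `b` has the parents `j` and
`s b j`, the sexes being the parity of the distance to `u`. An isomorphism of two such pedigrees
fixing the extant generation acts on every generation by a permutation; it determines the second
tuple, and consecutive permutations differ at most by the swap of the 2-cycle. Hence every
isomorphism class contains at most `2 ^ d` tuples.
-/

open Function Equiv Finset

theorem Equiv.Perm.exists_eq_prodCongrRight {ι β : Type*} (e : Perm (ι × β))
    (he : ∀ x, (e x).1 = x.1) : ∃ σ : ι → Perm β, e = prodCongrRight σ := by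
  have he' : ∀ x, (e.symm x).1 = x.1 := fun x => by
    conv_rhs => rw [← e.apply_symm_apply x]
    exact (he _).symm
  have hmk : ∀ i j, e (i, j) = (i, (e (i, j)).2) := fun i j => Prod.ext (he _) rfl
  have hmk' : ∀ i j, e.symm (i, j) = (i, (e.symm (i, j)).2) := fun i j => Prod.ext (he' _) rfl
  refine ⟨fun i => ⟨fun j => (e (i, j)).2, fun j => (e.symm (i, j)).2, fun j => ?_,
    fun j => ?_⟩, Equiv.ext fun ⟨i, j⟩ => hmk i j⟩
  · simp only [← hmk, symm_apply_apply]
  · simp only [← hmk', apply_symm_apply]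

theorem Nat.card_le_mul_card_of_card_fiber_le {X Y : Type*} [Finite X] [Finite Y] (f : X → Y)
    {k : ℕ} (hf : ∀ y, Nat.card {x // f x = y} ≤ k) : Nat.card X ≤ k * Nat.card Y := by
  have := Fintype.ofFinite Y
  calc Nat.card X = ∑ y, Nat.card {x // f x = y} := by
        rw [← Nat.card_congr (Equiv.sigmaFiberEquiv f), Nat.card_sigma]
    _ ≤ ∑ _y : Y, k := sum_le_sum fun y _ => hf y
    _ = k * Nat.card Y := by simp [Nat.card_eq_fintype_card, mul_comm]

theorem card_piFinset_ite_mem_singleton {α : Type*} [Fintype α] [DecidableEq α] (E : Finset α) :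
    #(Fintype.piFinset fun x => if x ∈ E then {x} else univ) =
      Fintype.card α ^ (Fintype.card α - #E) := by
  simp [Fintype.card_piFinset, apply_ite Finset.card, prod_ite, filter_not, card_univ_sdiff]

section Orbits

variable {α : Type*}

theorem Function.exists_iterate_mem_periodicPts [Finite α] (f : α → α) (x : α) :
    ∃ k, f^[k] x ∈ periodicPts f := by
  obtain ⟨i, j, hij, heq⟩ := Finite.exists_ne_map_eq_of_infinite fun k => f^[k] x
  wlog hlt : i < j generalizing i j
  · exact this j i hij.symm heq.symm (by omega)
  refine ⟨i, mk_mem_periodicPts (n := j - i) (by omega) ?_⟩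
  change f^[j - i] (f^[i] x) = f^[i] x
  rw [← iterate_add_apply, Nat.sub_add_cancel hlt.le]
  exact heq.symm

theorem exists_iterate_eq_of_iterate_mem {f g : α → α} {S : Set α} {u : α}
    (hfg : ∀ x ∉ S, g x = f x) (hS : ∀ x ∈ S, ∃ k, g^[k] x = u) {k : ℕ} {x : α}
    (hx : f^[k] x ∈ S) : ∃ m, g^[m] x = u := by
  induction k generalizing x with
  | zero => exact hS x hx
  | succ k ih =>
    by_cases hxS : x ∈ S
    · exact hS x hxS
    obtain ⟨m, hm⟩ := ih (x := f x) hx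
    exact ⟨m + 1, by rwa [iterate_succ_apply, hfg x hxS]⟩

theorem List.iterate_getD_zero_of_apply_getElem {G : α → α} {P : List α} {a : α}
    (hG : ∀ i (hi : i < P.length), G P[i] = P.getD (i + 1) a) {i : ℕ} (hi : i ≤ P.length) :
    G^[i] (P.getD 0 a) = P.getD i a := by
  induction i with
  | zero => rfl
  | succ i ih =>
    rw [iterate_succ_apply', ih (by omega), List.getD_eq_getElem _ _ (by omega), hG]

theorem List.eq_of_iterate_eq_getD {G : α → α} {x a b : α} {P Q : List α}
    (hP : ∀ i ≤ P.length, G^[i] x = P.getD i a) (hQ : ∀ i ≤ Q.length, G^[i] x = Q.getD i b)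
    (ha : a ∉ Q) (hb : b ∉ P) : P = Q ∧ a = b := by
  have length_not_lt : ∀ {P Q : List α} {a b : α},
      (∀ i ≤ P.length, G^[i] x = P.getD i a) → (∀ i ≤ Q.length, G^[i] x = Q.getD i b) →
      a ∉ Q → ¬ P.length < Q.length := by
    intro P Q a b hP hQ ha hlt
    have h := (hP _ le_rfl).symm.trans (hQ _ hlt.le)
    rw [List.getD_eq_default _ _ le_rfl, List.getD_eq_getElem _ _ hlt] at h
    exact ha (h ▸ List.getElem_mem hlt)
  have hlen : P.length = Q.length := by
    have := length_not_lt hP hQ ha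
    have := length_not_lt hQ hP hb
    omega
  have hab : a = b := by
    have h := (hP _ le_rfl).symm.trans (hQ _ (hlen ▸ le_rfl))
    rwa [List.getD_eq_default _ _ le_rfl, List.getD_eq_default _ _ hlen.ge] at h
  refine ⟨List.ext_getElem hlen fun i h₁ h₂ => ?_, hab⟩
  have h := (hP i h₁.le).symm.trans (hQ i h₂.le)
  rwa [List.getD_eq_getElem _ _ h₁, List.getD_eq_getElem _ _ h₂] at h

end Orbits

section BranchingPath

variable {β : Type*} {d : ℕ}

def IsBranchingPath (x₀ : β) (next : Fin d → β → β) (σ : Fin (d + 1) → β) : Prop :=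
  σ 0 = x₀ ∧ ∀ b, σ b.succ = σ b.castSucc ∨ σ b.succ = next b (σ b.castSucc)

theorem card_isBranchingPath_le (x₀ : β) (next : Fin d → β → β) :
    Nat.card {σ // IsBranchingPath x₀ next σ} ≤ 2 ^ d := by
  classical
  have hinj : Injective fun σ : {σ // IsBranchingPath x₀ next σ} =>
      fun b : Fin d => decide (σ.1 b.succ = σ.1 b.castSucc) := by
    intro σ τ heq
    obtain ⟨hσ₀, hσ⟩ := σ.2
    obtain ⟨hτ₀, hτ⟩ := τ.2
    refine Subtype.ext (funext fun i => ?_)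
    induction i using Fin.induction with
    | zero => exact hσ₀.trans hτ₀.symm
    | succ b ih =>
      have hstay : σ.1 b.succ = σ.1 b.castSucc ↔ τ.1 b.succ = τ.1 b.castSucc := by
        simpa using congrFun heq b
      by_cases hs : σ.1 b.succ = σ.1 b.castSucc
      · rw [hs, ih, hstay.mp hs]
      · rw [(hσ b).resolve_left hs, (hτ b).resolve_left (hstay.not.mp hs), ih]
  calc Nat.card {σ // IsBranchingPath x₀ next σ} ≤ Nat.card (Fin d → Bool) :=
        Nat.card_le_card_of_injective _ hinj
    _ = 2 ^ d := by simp

end BranchingPath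

/-! ### Two-cycle trees -/

structure IsTwoCycleTree {α : Type*} (g : α → α) (u v : α) : Prop where
  ne : u ≠ v
  apply_left : g u = v
  apply_right : g v = u
  exists_iterate_eq : ∀ x, ∃ k, g^[k] x = u

abbrev TwoCycleTree (α : Type*) := {g : α → α // ∃ u v, IsTwoCycleTree g u v}

namespace IsTwoCycleTree

variable {α : Type*} {g : α → α} {u v : α}

theorem isPeriodicPt_left (hg : IsTwoCycleTree g u v) : IsPeriodicPt g 2 u := by
  change g (g u) = u
  rw [hg.apply_left, hg.apply_right]

theorem isPeriodicPt_right (hg : IsTwoCycleTree g u v) : IsPeriodicPt g 2 v := by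
  change g (g v) = v
  rw [hg.apply_right, hg.apply_left]

theorem iterate_left (hg : IsTwoCycleTree g u v) (k : ℕ) :
    g^[k] u = if Even k then u else v := by
  induction k with
  | zero => simp
  | succ k ih =>
    rw [iterate_succ_apply', ih]
    by_cases h : Even k <;> simp [h, Nat.even_add_one, hg.apply_left, hg.apply_right]

theorem eq_or_eq_of_isPeriodicPt (hg : IsTwoCycleTree g u v) {x : α} {p : ℕ} (hp : 0 < p)
    (hx : IsPeriodicPt g p x) : x = u ∨ x = v := by
  obtain ⟨k, hk⟩ := hg.exists_iterate_eq x
  have hx' : g^[p * k - k] u = x := by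
    rw [← hk, ← iterate_add_apply, Nat.sub_add_cancel (Nat.le_mul_of_pos_left k hp),
      (hx.mul_const k).eq]
  rw [← hx', hg.iterate_left]
  split_ifs <;> simp

theorem apply_ne (hg : IsTwoCycleTree g u v) (x : α) : g x ≠ x := by
  intro hx
  rcases hg.eq_or_eq_of_isPeriodicPt one_pos hx with rfl | rfl
  · exact hg.ne (hx.symm.trans hg.apply_left)
  · exact hg.ne (hx.symm.trans hg.apply_right).symm

theorem even_iff_of_iterate_eq (hg : IsTwoCycleTree g u v) {x : α} {k l : ℕ}
    (hk : g^[k] x = u) (hl : g^[l] x = u) : Even k ↔ Even l := by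
  wlog hkl : k ≤ l generalizing k l
  · exact (this hl hk (by omega)).symm
  have hu : g^[l - k] u = u := by
    conv_lhs => rw [← hk, ← iterate_add_apply, Nat.sub_add_cancel hkl, hl]
  rw [hg.iterate_left] at hu
  split_ifs at hu with h
  · exact ((Nat.even_sub hkl).mp h).symm
  · exact absurd hu.symm hg.ne

/-- Colouring by the parity of the distance to `u` is proper, since the cycle has even length. -/
theorem exists_set_apply_mem_iff (hg : IsTwoCycleTree g u v) :
    ∃ M : Set α, ∀ x, g x ∈ M ↔ x ∉ M := by
  set M : Set α := {x | ∃ k, Even k ∧ g^[k] x = u}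
  have hM : ∀ x k, g^[k] x = u → (x ∈ M ↔ Even k) := fun x k hk =>
    ⟨fun ⟨l, hl, hlx⟩ => (hg.even_iff_of_iterate_eq hlx hk).mp hl, fun h => ⟨k, h, hk⟩⟩
  refine ⟨M, fun x => ?_⟩
  obtain ⟨k, hk⟩ := hg.exists_iterate_eq x
  have hgx : g^[k + 1] (g x) = u := by
    rw [← iterate_succ_apply, iterate_succ_apply', iterate_succ_apply', hk, hg.apply_left,
      hg.apply_right]
  rw [hM x k hk, hM _ _ hgx, Nat.even_add_one]

/-- If `ρ` moves `j` then it moves `g j` too, so it moves the cycle, swapping `u` and `v`; pulling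
back along `g` then shows that no other point moves. -/
theorem eq_one_or_eq_swap [DecidableEq α] (hg : IsTwoCycleTree g u v) {ρ : Perm α}
    (hρ : ∀ j, ρ j ≠ j → ρ (g j) = j) : ρ = 1 ∨ ρ = swap u v := by
  have moved_apply : ∀ j, ρ j ≠ j → ρ (g j) ≠ g j := fun j hj h =>
    hg.apply_ne j ((hρ j hj).symm.trans h).symm
  by_cases hfix : ∀ j, ρ j = j
  · exact Or.inl (Equiv.ext hfix)
  simp only [not_forall] at hfix
  obtain ⟨j₀, hj₀⟩ := hfix
  have hu : ρ u ≠ u := by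
    obtain ⟨k, hk⟩ := hg.exists_iterate_eq j₀
    rw [← hk]
    clear hk
    induction k with
    | zero => exact hj₀
    | succ k ih => rw [iterate_succ_apply']; exact moved_apply _ ih
  have hρv : ρ v = u := hg.apply_left ▸ hρ u hu
  have hρu : ρ u = v := hg.apply_right ▸ hρ v (by rw [hρv]; exact hg.ne)
  have hmoved : ∀ k j, ρ j ≠ j → g^[k] j = u → j = u ∨ j = v := by
    intro k
    induction k with
    | zero => exact fun j _ h => Or.inl h
    | succ k ih =>
      intro j hj h
      rcases ih (g j) (moved_apply j hj) h with h' | h'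
      · right; rw [← hρ j hj, h', hρu]
      · left; rw [← hρ j hj, h', hρv]
  refine Or.inr (Equiv.ext fun x => ?_)
  by_cases hx : ρ x = x
  · have hxu : x ≠ u := by rintro rfl; exact hu hx
    have hxv : x ≠ v := by rintro rfl; exact hg.ne (hρv.symm.trans hx)
    rw [hx, swap_apply_of_ne_of_ne hxu hxv]
  · obtain ⟨k, hk⟩ := hg.exists_iterate_eq x
    rcases hmoved k x hx hk with rfl | rfl
    · rw [hρu, swap_apply_left]
    · rw [hρv, swap_apply_right]

end IsTwoCycleTree

theorem isTwoCycleTree_swap {α : Type*} [Fintype α] [DecidableEq α] (hα : Fintype.card α = 2)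
    {u v : α} (huv : u ≠ v) : IsTwoCycleTree (swap u v) u v := by
  refine ⟨huv, swap_apply_left u v, swap_apply_right u v, fun x => ?_⟩
  have huniv : ({u, v} : Finset α) = univ := eq_univ_of_card _ (by rw [card_pair huv, hα])
  rcases mem_insert.mp (huniv ▸ mem_univ x) with rfl | hx
  · exact ⟨0, rfl⟩
  · exact ⟨1, by simp [mem_singleton.mp hx]⟩

/-! ### Joyal's encoding -/

section CycleList

variable {α : Type*} [LinearOrder α] [Fintype α] {E : Finset α} {h h' : α → α} {x : α}

open Classical in
noncomputable def cyclicPart (E : Finset α) (h : α → α) : Finset α :=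
  univ.filter fun x => x ∉ E ∧ x ∈ periodicPts h

theorem mem_cyclicPart : x ∈ cyclicPart E h ↔ x ∉ E ∧ x ∈ periodicPts h := by
  simp [cyclicPart]

theorem bijOn_cyclicPart (hE : ∀ x ∈ E, h x = x) :
    Set.BijOn h (cyclicPart E h) (cyclicPart E h) := by
  have hbij := bijOn_periodicPts h
  simp only [Set.BijOn, Set.MapsTo, Set.InjOn, Set.SurjOn, Set.subset_def, mem_coe,
    mem_cyclicPart, Set.mem_image]
  refine ⟨fun x ⟨hxE, hx⟩ => ⟨fun hhx => hxE ?_, hbij.mapsTo hx⟩,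
    fun x ⟨_, hx⟩ y ⟨_, hy⟩ => hbij.injOn hx hy, fun y ⟨hyE, hy⟩ => ?_⟩
  · have hfix : h x = x := hbij.injOn (hbij.mapsTo hx) hx (hE _ hhx)
    rwa [hfix] at hhx
  · obtain ⟨x, hx, rfl⟩ := hbij.surjOn hy
    exact ⟨x, ⟨fun hxE => hyE (by rwa [hE x hxE]), hx⟩, rfl⟩

/-- The one-line notation of the permutation that `h` induces on its cycles outside `E`. -/
noncomputable def cycleList (E : Finset α) (h : α → α) : List α :=
  ((cyclicPart E h).sort (· ≤ ·)).map h

theorem nodup_cycleList (hE : ∀ x ∈ E, h x = x) : (cycleList E h).Nodup :=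
  (sort_nodup _ _).map_on fun _ hx _ hy =>
    (bijOn_cyclicPart hE).injOn ((mem_sort _).mp hx) ((mem_sort _).mp hy)

theorem mem_cycleList (hE : ∀ x ∈ E, h x = x) :
    x ∈ cycleList E h ↔ x ∈ cyclicPart E h := by
  simp only [cycleList, List.mem_map, mem_sort]
  constructor
  · rintro ⟨y, hy, rfl⟩
    exact (bijOn_cyclicPart hE).mapsTo hy
  · exact fun hx => (bijOn_cyclicPart hE).surjOn hx

theorem eqOn_cyclicPart_of_cycleList_eq (hE : ∀ x ∈ E, h x = x) (hE' : ∀ x ∈ E, h' x = x)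
    (hL : cycleList E h = cycleList E h') : ∀ x ∈ cyclicPart E h, h x = h' x := by
  have hZ : cyclicPart E h = cyclicPart E h' := by
    ext x
    rw [← mem_cycleList hE, hL, mem_cycleList hE']
  rw [cycleList, cycleList, ← hZ, List.map_eq_map_iff] at hL
  exact fun x hx => hL x ((mem_sort _).mpr hx)

end CycleList

section TreeEncode

variable {α : Type*} [LinearOrder α] [Fintype α] {u v w u' v' : α} {h h' : α → α}

structure IsTreeCode (u v w : α) (h : α → α) : Prop where
  ne : u ≠ v
  ne_left : w ≠ u
  ne_right : w ≠ v
  apply_eq : ∀ x ∈ ({u, v, w} : Finset α), h x = x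

noncomputable def spine (u v w : α) (h : α → α) : List α := w :: cycleList {u, v, w} h

/-- Joyal's construction: the cycles of `h` are cut open and strung, in one-line notation, along
a path from `w` to the 2-cycle `u ⇄ v`; elsewhere `h` is kept. -/
noncomputable def treeEncode (u v w : α) (h : α → α) (x : α) : α :=
  if x = u then v
  else if x = v then u
  else if x ∈ spine u v w h then (spine u v w h).getD ((spine u v w h).idxOf x + 1) u
  else h x

theorem treeEncode_of_notMem {x : α} (hx : x ∉ ({u, v} : Set α)) (hxs : x ∉ spine u v w h) :
    treeEncode u v w h x = h x := by
  simp only [Set.mem_insert_iff, Set.mem_singleton_iff, not_or] at hx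
  simp only [treeEncode, if_neg hx.1, if_neg hx.2, if_neg hxs]

namespace IsTreeCode

theorem mem_spine_iff (hc : IsTreeCode u v w h) {x : α} :
    x ∈ spine u v w h ↔ x = w ∨ x ∈ cyclicPart {u, v, w} h := by
  rw [spine, List.mem_cons, mem_cycleList hc.apply_eq]

theorem ne_of_mem_spine (hc : IsTreeCode u v w h) {x : α} (hx : x ∈ spine u v w h) :
    x ≠ u ∧ x ≠ v := by
  rcases hc.mem_spine_iff.mp hx with rfl | hx
  · exact ⟨hc.ne_left, hc.ne_right⟩
  · have := (mem_cyclicPart.mp hx).1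
    simp only [mem_insert, mem_singleton, not_or] at this
    exact ⟨this.1, this.2.1⟩

theorem nodup_spine (hc : IsTreeCode u v w h) : (spine u v w h).Nodup := by
  refine List.nodup_cons.mpr ⟨fun hw => ?_, nodup_cycleList hc.apply_eq⟩
  exact (mem_cyclicPart.mp ((mem_cycleList hc.apply_eq).mp hw)).1 (by simp)

theorem iterate_treeEncode (hc : IsTreeCode u v w h) {i : ℕ}
    (hi : i ≤ (spine u v w h).length) :
    (treeEncode u v w h)^[i] w = (spine u v w h).getD i u := by
  refine List.iterate_getD_zero_of_apply_getElem (fun i hi => ?_) hi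
  obtain ⟨hne_u, hne_v⟩ := hc.ne_of_mem_spine (List.getElem_mem hi)
  rw [treeEncode, if_neg hne_u, if_neg hne_v, if_pos (List.getElem_mem hi),
    hc.nodup_spine.idxOf_getElem]

theorem isTwoCycleTree_treeEncode (hc : IsTreeCode u v w h) :
    IsTwoCycleTree (treeEncode u v w h) u v := by
  have hleft : treeEncode u v w h u = v := by simp [treeEncode]
  have hright : treeEncode u v w h v = u := by simp [treeEncode, hc.ne.symm]
  set S : Set α := {u, v} ∪ {x | x ∈ spine u v w h}
  have hS : ∀ x ∈ S, ∃ k, (treeEncode u v w h)^[k] x = u := by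
    rintro x ((rfl | rfl) | hx)
    · exact ⟨0, rfl⟩
    · exact ⟨1, hright⟩
    · obtain ⟨i, hi, rfl⟩ := List.mem_iff_getElem.mp hx
      refine ⟨(spine u v w h).length - i, ?_⟩
      rw [← List.getD_eq_getElem _ u hi, ← hc.iterate_treeEncode hi.le, ← iterate_add_apply,
        Nat.sub_add_cancel hi.le, hc.iterate_treeEncode le_rfl,
        List.getD_eq_default _ _ le_rfl]
  have hper : periodicPts h ⊆ S := fun x hx => by
    by_cases hxE : x ∈ ({u, v, w} : Finset α)
    · simp only [mem_insert, mem_singleton] at hxE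
      rcases hxE with rfl | rfl | rfl <;> simp [S, spine]
    · exact Or.inr (hc.mem_spine_iff.mpr (Or.inr (mem_cyclicPart.mpr ⟨hxE, hx⟩)))
  refine ⟨hc.ne, hleft, hright, fun x => ?_⟩
  obtain ⟨k, hk⟩ := exists_iterate_mem_periodicPts h x
  refine exists_iterate_eq_of_iterate_mem (fun x hx => ?_) hS (hper hk)
  simp only [S, Set.mem_union, not_or] at hx
  exact treeEncode_of_notMem hx.1 hx.2

theorem left_notMem_spine (hc : IsTreeCode u v w h) (hc' : IsTreeCode u' v' w h')
    (hG : treeEncode u v w h = treeEncode u' v' w h') : u' ∉ spine u v w h := fun hmem => by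
  have hper : IsPeriodicPt (treeEncode u v w h) 2 u' :=
    hG ▸ hc'.isTwoCycleTree_treeEncode.isPeriodicPt_left
  have := hc.ne_of_mem_spine hmem
  rcases hc.isTwoCycleTree_treeEncode.eq_or_eq_of_isPeriodicPt two_pos hper with h | h
  · exact this.1 h
  · exact this.2 h

/-- The 2-cycle of `treeEncode` is intrinsic, and `u` is told apart from `v` as the point where
the path from `w` first meets it. -/
theorem eq_of_treeEncode_eq (hc : IsTreeCode u v w h) (hc' : IsTreeCode u' v' w h')
    (hG : treeEncode u v w h = treeEncode u' v' w h') : u = u' ∧ v = v' ∧ h = h' := by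
  obtain ⟨hspine, rfl⟩ := List.eq_of_iterate_eq_getD (fun i hi => hc.iterate_treeEncode hi)
    (fun i hi => hG ▸ hc'.iterate_treeEncode hi) (hc'.left_notMem_spine hc hG.symm)
    (hc.left_notMem_spine hc' hG)
  obtain rfl : v = v' := by
    rw [← hc.isTwoCycleTree_treeEncode.apply_left, ← hc'.isTwoCycleTree_treeEncode.apply_left,
      hG]
  refine ⟨rfl, rfl, funext fun x => ?_⟩
  by_cases hxE : x ∈ ({u, v, w} : Finset α)
  · rw [hc.apply_eq x hxE, hc'.apply_eq x hxE]
  by_cases hxZ : x ∈ cyclicPart {u, v, w} h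
  · exact eqOn_cyclicPart_of_cycleList_eq hc.apply_eq hc'.apply_eq (List.cons.inj hspine).2 x hxZ
  have huv : x ∉ ({u, v} : Set α) := fun hx => hxE (by rcases hx with rfl | rfl <;> simp)
  have hxs : x ∉ spine u v w h := fun hx => by
    rcases hc.mem_spine_iff.mp hx with rfl | hx
    · exact hxE (by simp)
    · exact hxZ hx
  rw [← treeEncode_of_notMem (h := h) huv hxs,
    ← treeEncode_of_notMem (h := h') huv (hspine ▸ hxs), hG]

end IsTreeCode

end TreeEncode

section Counting

variable {α : Type*} [LinearOrder α] [Fintype α]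

theorem compl_pair_nonempty (hα : 3 ≤ Fintype.card α) (u v : α) :
    ({u, v}ᶜ : Finset α).Nonempty := by
  rw [← card_pos, card_compl]
  have := card_le_two (a := u) (b := v)
  omega

noncomputable def third (hα : 3 ≤ Fintype.card α) (u v : α) : α :=
  ({u, v}ᶜ : Finset α).min' (compl_pair_nonempty hα u v)

theorem third_comm (hα : 3 ≤ Fintype.card α) (u v : α) : third hα v u = third hα u v := by
  simp only [third, pair_comm]

theorem third_ne (hα : 3 ≤ Fintype.card α) (u v : α) :
    third hα u v ≠ u ∧ third hα u v ≠ v := by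
  have := min'_mem _ (compl_pair_nonempty hα u v)
  simp only [mem_compl, mem_insert, mem_singleton, not_or] at this
  exact this

noncomputable def treeCodes (hα : 3 ≤ Fintype.card α) : Finset (Σ _ : α × α, α → α) :=
  univ.offDiag.sigma fun p => Fintype.piFinset fun x =>
    if x ∈ ({p.1, p.2, third hα p.1 p.2} : Finset α) then {x} else univ

theorem isTreeCode_of_mem_treeCodes (hα : 3 ≤ Fintype.card α) {c : Σ _ : α × α, α → α}
    (hc : c ∈ treeCodes hα) : IsTreeCode c.1.1 c.1.2 (third hα c.1.1 c.1.2) c.2 := by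
  simp only [treeCodes, mem_sigma, mem_offDiag, mem_univ, true_and, Fintype.mem_piFinset] at hc
  refine ⟨hc.1, (third_ne hα _ _).1, (third_ne hα _ _).2, fun x hx => ?_⟩
  simpa [hx] using hc.2 x

theorem card_treeCodes (hα : 3 ≤ Fintype.card α) :
    #(treeCodes hα) = (Fintype.card α - 1) * Fintype.card α ^ (Fintype.card α - 2) := by
  have hfib : ∀ p ∈ (univ : Finset α).offDiag, #(Fintype.piFinset fun x =>
      if x ∈ ({p.1, p.2, third hα p.1 p.2} : Finset α) then {x} else univ) =
      Fintype.card α ^ (Fintype.card α - 3) := by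
    intro p hp
    have hp : p.1 ≠ p.2 := (mem_offDiag.mp hp).2.2
    have hE : #({p.1, p.2, third hα p.1 p.2} : Finset α) = 3 := card_eq_three.mpr
      ⟨_, _, _, hp, (third_ne hα _ _).1.symm, (third_ne hα _ _).2.symm, rfl⟩
    rw [card_piFinset_ite_mem_singleton, hE]
  rw [treeCodes, card_sigma, sum_congr rfl hfib, sum_const, smul_eq_mul, offDiag_card, card_univ,
    ← Nat.sub_one_mul, mul_assoc, ← pow_succ',
    show Fintype.card α - 3 + 1 = Fintype.card α - 2 by omega]

theorem injOn_treeCodes (hα : 3 ≤ Fintype.card α) :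
    Set.InjOn
      (fun c : Σ _ : α × α, α → α => treeEncode c.1.1 c.1.2 (third hα c.1.1 c.1.2) c.2)
      (treeCodes hα) := by
  rintro ⟨⟨u, v⟩, h⟩ hc ⟨⟨u', v'⟩, h'⟩ hc' hG
  have hc := isTreeCode_of_mem_treeCodes hα hc
  have hc' := isTreeCode_of_mem_treeCodes hα hc'
  dsimp only at hc hc' hG
  have hT := hc.isTwoCycleTree_treeEncode
  have hT' := hc'.isTwoCycleTree_treeEncode
  rw [← hG] at hT'
  have hthird : third hα u' v' = third hα u v := by
    rcases hT.eq_or_eq_of_isPeriodicPt two_pos hT'.isPeriodicPt_left with rfl | rfl <;>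
    rcases hT.eq_or_eq_of_isPeriodicPt two_pos hT'.isPeriodicPt_right with rfl | rfl
    · exact absurd rfl hc'.ne
    · rfl
    · exact third_comm hα _ _
    · exact absurd rfl hc'.ne
  rw [hthird] at hc' hG
  obtain ⟨rfl, rfl, rfl⟩ := hc.eq_of_treeEncode_eq hc' hG
  rfl

theorem le_card_twoCycleTree :
    (Fintype.card α - 1) * Fintype.card α ^ (Fintype.card α - 2) ≤
      Nat.card (TwoCycleTree α) := by
  rcases lt_trichotomy (Fintype.card α) 2 with hlt | h2 | hα
  · simp [show Fintype.card α - 1 = 0 by omega]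
  · obtain ⟨u, v, huv⟩ := Fintype.exists_pair_of_one_lt_card (by omega : 1 < Fintype.card α)
    have : Nonempty (TwoCycleTree α) := ⟨⟨_, u, v, isTwoCycleTree_swap h2 huv⟩⟩
    simpa [h2] using Nat.one_le_iff_ne_zero.mpr Nat.card_pos.ne'
  · rw [← card_treeCodes hα, ← Nat.card_eq_finsetCard]
    exact Nat.card_le_card_of_injective
      (fun c => ⟨_, _, _, (isTreeCode_of_mem_treeCodes hα c.2).isTwoCycleTree_treeEncode⟩)
      fun c c' hcc' => Subtype.ext (injOn_treeCodes hα c.2 c'.2 (congrArg Subtype.val hcc'))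

end Counting

/-! ### Generations of a pedigree -/

namespace SimplePedigree

variable {n d : ℕ}

instance : Finite (SimplePedigree n d) :=
  Finite.of_injective SimplePedigree.A fun P Q h => by cases P; cases Q; cases h; rfl

def HasLineage (P : SimplePedigree n d) : ℕ → Fin (d + 1) × Fin n → Prop
  | 0, _ => True
  | k + 1, x => ∃ y, P.A y x ∧ P.HasLineage k y

theorem hasLineage_iff (P : SimplePedigree n d) {k : ℕ} {x : Fin (d + 1) × Fin n} :
    P.HasLineage k x ↔ (x.1 : ℕ) + k ≤ d := by
  induction k generalizing x with
  | zero => simpa [HasLineage] using Nat.lt_succ_iff.mp x.1.isLt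
  | succ k ih =>
    constructor
    · rintro ⟨y, hyx, hy⟩
      have := P.arc_level y x hyx
      have := ih.mp hy
      omega
    · intro hx
      obtain ⟨M, F, -, -, hpar⟩ := P.parents
      obtain ⟨y, -, -, -, hyx, -, -⟩ := hpar x (by omega)
      have := P.arc_level y x hyx
      exact ⟨y, hyx, ih.mpr (by omega)⟩

theorem HasLineage.map {P Q : SimplePedigree n d}
    {φ : Fin (d + 1) × Fin n → Fin (d + 1) × Fin n}
    (hφ : ∀ x y, P.A x y → Q.A (φ x) (φ y)) {k : ℕ} {x : Fin (d + 1) × Fin n}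
    (hx : P.HasLineage k x) : Q.HasLineage k (φ x) := by
  induction k generalizing x with
  | zero => trivial
  | succ k ih =>
    obtain ⟨y, hyx, hy⟩ := hx
    exact ⟨φ y, hφ y x hyx, ih hy⟩

/-- A vertex of generation `i` has a line of ancestors of length `d - i` and no longer one. -/
theorem fst_apply_le_of_arc_imp {P Q : SimplePedigree n d}
    {φ : Fin (d + 1) × Fin n → Fin (d + 1) × Fin n}
    (hφ : ∀ x y, P.A x y → Q.A (φ x) (φ y)) (x : Fin (d + 1) × Fin n) :
    (φ x).1 ≤ x.1 := by
  have := Q.hasLineage_iff.mp ((P.hasLineage_iff (k := d - x.1) (x := x)).mpr (by omega) |>.map hφ)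
  exact Fin.le_def.mpr (by omega)

theorem fst_apply_eq_of_arc_iff {P Q : SimplePedigree n d} (φ : Perm (Fin (d + 1) × Fin n))
    (hφ : ∀ x y, P.A x y ↔ Q.A (φ x) (φ y)) (x : Fin (d + 1) × Fin n) : (φ x).1 = x.1 := by
  have hφ' : ∀ x y, Q.A x y → P.A (φ.symm x) (φ.symm y) := fun x y h => by
    rwa [hφ, apply_symm_apply, apply_symm_apply]
  refine le_antisymm (fst_apply_le_of_arc_imp (fun x y => (hφ x y).mp) x) ?_
  simpa using fst_apply_le_of_arc_imp hφ' (φ x)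

end SimplePedigree

variable {n d : ℕ}

theorem pedigreeIso_equivalence : Equivalence (@PedigreeIso n d) where
  refl _ := ⟨Equiv.refl _, fun _ _ => Iff.rfl, fun _ => rfl⟩
  symm := by
    rintro P Q ⟨φ, hφ, hφ₀⟩
    refine ⟨φ.symm, fun x y => ?_, fun j => φ.symm_apply_eq.mpr (hφ₀ j).symm⟩
    rw [hφ, apply_symm_apply, apply_symm_apply]
  trans := by
    rintro P Q R ⟨φ, hφ, hφ₀⟩ ⟨ψ, hψ, hψ₀⟩
    exact ⟨φ.trans ψ, fun x y => (hφ x y).trans (hψ _ _), fun j => by simp [hφ₀, hψ₀]⟩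

theorem PedigreeIso.exists_levelPerm {P Q : SimplePedigree n d} (h : PedigreeIso P Q) :
    ∃ σ : Fin (d + 1) → Perm (Fin n), σ 0 = 1 ∧
      ∀ i i' j j', P.A (i, j) (i', j') ↔ Q.A (i, σ i j) (i', σ i' j') := by
  obtain ⟨φ, hφ, hφ₀⟩ := h
  obtain ⟨σ, rfl⟩ :=
    Equiv.Perm.exists_eq_prodCongrRight φ (SimplePedigree.fst_apply_eq_of_arc_iff φ hφ)
  exact ⟨σ, Equiv.ext fun j => by simpa using hφ₀ j, fun i i' j j' => hφ (i, j) (i', j')⟩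

/-! ### Pedigrees from two-cycle trees -/

section TreePedigree

def treeArc (s : Fin d → TwoCycleTree (Fin n)) (x y : Fin (d + 1) × Fin n) : Prop :=
  ∃ b : Fin d, x.1 = b.succ ∧ y.1 = b.castSucc ∧ (x.2 = y.2 ∨ x.2 = (s b).1 y.2)

theorem treeArc_castSucc_iff (s : Fin d → TwoCycleTree (Fin n)) (b : Fin d)
    (x : Fin (d + 1) × Fin n) (j : Fin n) :
    treeArc s x (b.castSucc, j) ↔ x = (b.succ, j) ∨ x = (b.succ, (s b).1 j) := by
  constructor
  · rintro ⟨b', hx, hb', hj⟩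
    obtain rfl := Fin.castSucc_injective _ hb'
    rcases hj with hj | hj
    · exact Or.inl (Prod.ext hx hj)
    · exact Or.inr (Prod.ext hx hj)
  · rintro (rfl | rfl)
    · exact ⟨b, rfl, rfl, Or.inl rfl⟩
    · exact ⟨b, rfl, rfl, Or.inr rfl⟩

theorem treeArc_succ_castSucc_iff (s : Fin d → TwoCycleTree (Fin n)) (b : Fin d)
    (m j : Fin n) : treeArc s (b.succ, m) (b.castSucc, j) ↔ m = j ∨ m = (s b).1 j := by
  simp [treeArc_castSucc_iff]

/-- Sexes in generation `b + 1` come from a proper 2-colouring of the functional graph of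
`s b`, so the two parents `j` and `s b j` always have opposite sexes. -/
def treePedigree (s : Fin d → TwoCycleTree (Fin n)) : SimplePedigree n d where
  A := treeArc s
  arc_level := by
    rintro x y ⟨b, hx, hy, -⟩
    simp [hx, hy]
  parents := by
    have hcol : ∀ b, ∃ M : Set (Fin n), ∀ j, (s b).1 j ∈ M ↔ j ∉ M := fun b => by
      obtain ⟨u, v, hg⟩ := (s b).2
      exact hg.exists_set_apply_mem_iff
    choose M hM using hcol
    set male : Set (Fin (d + 1) × Fin n) := {x | ∃ b, x.1 = b.succ ∧ x.2 ∈ M b}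
    have hmale : ∀ b j, (b.succ, j) ∈ male ↔ j ∈ M b := fun b j =>
      ⟨fun ⟨b', hb', hj⟩ => Fin.succ_injective _ hb' ▸ hj, fun hj => ⟨b, rfl, hj⟩⟩
    refine ⟨male, maleᶜ, disjoint_compl_right, Set.union_compl_self _, ?_⟩
    rintro ⟨⟨i, hi⟩, j⟩ (hid : i < d)
    set b : Fin d := ⟨i, hid⟩
    change ∃ x y, _ ∧ _ ∧ treeArc s x (b.castSucc, j) ∧ treeArc s y (b.castSucc, j) ∧
      ∀ w, treeArc s w (b.castSucc, j) → w = x ∨ w = y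
    simp only [treeArc_castSucc_iff, Set.mem_compl_iff]
    by_cases hj : j ∈ M b
    · exact ⟨_, _, (hmale b j).mpr hj, fun h => (hM b j).mp ((hmale b _).mp h) hj,
        Or.inl rfl, Or.inr rfl, fun _ => id⟩
    · exact ⟨_, _, (hmale b _).mpr ((hM b j).mpr hj), fun h => hj ((hmale b j).mp h),
        Or.inr rfl, Or.inl rfl, fun _ => Or.symm⟩

def IsLevelIso (s t : Fin d → TwoCycleTree (Fin n)) (σ : Fin (d + 1) → Perm (Fin n)) : Prop :=
  ∀ b m j, (m = j ∨ m = (s b).1 j) ↔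
    (σ b.succ m = σ b.castSucc j ∨ σ b.succ m = (t b).1 (σ b.castSucc j))

theorem PedigreeIso.exists_isLevelIso {s t : Fin d → TwoCycleTree (Fin n)}
    (h : PedigreeIso (treePedigree s) (treePedigree t)) :
    ∃ σ, σ 0 = 1 ∧ IsLevelIso s t σ := by
  obtain ⟨σ, hσ₀, hσ⟩ := h.exists_levelPerm
  refine ⟨σ, hσ₀, fun b m j => ?_⟩
  rw [← treeArc_succ_castSucc_iff, ← treeArc_succ_castSucc_iff]
  exact hσ _ _ _ _

theorem IsLevelIso.right_unique {s t t' : Fin d → TwoCycleTree (Fin n)}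
    {σ : Fin (d + 1) → Perm (Fin n)} (h : IsLevelIso s t σ) (h' : IsLevelIso s t' σ) :
    t = t' := by
  funext b
  obtain ⟨u, v, ht⟩ := (t b).2
  refine Subtype.ext (funext fun x => ?_)
  set j := (σ b.castSucc).symm x
  set m := (σ b.succ).symm ((t b).1 x)
  have hm : σ b.succ m = (t b).1 (σ b.castSucc j) := by simp [m, j]
  have := (h' b m j).mp ((h b m j).mpr (Or.inr hm))
  simp only [m, j, apply_symm_apply] at this
  exact this.resolve_left (ht.apply_ne x)

theorem IsLevelIso.succ_eq_or {s t : Fin d → TwoCycleTree (Fin n)}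
    {σ : Fin (d + 1) → Perm (Fin n)} (h : IsLevelIso s t σ) {b : Fin d} {u v : Fin n}
    (hs : IsTwoCycleTree (s b).1 u v) :
    σ b.succ = σ b.castSucc ∨ σ b.succ = σ b.castSucc * swap u v := by
  set ρ := (σ b.castSucc)⁻¹ * σ b.succ
  have hρ : ∀ j, ρ j ≠ j → ρ ((s b).1 j) = j := by
    intro j hj
    have hσj : σ b.succ j ≠ σ b.castSucc j := fun h => hj (by simp [ρ, h])
    have h1 := ((h b j j).mp (Or.inl rfl)).resolve_left hσj
    have h2 := (h b ((s b).1 j) j).mp (Or.inr rfl)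
    rw [← h1, (σ b.succ).injective.eq_iff] at h2
    simpa [ρ, Equiv.symm_apply_eq] using h2.resolve_right (hs.apply_ne j)
  rcases hs.eq_one_or_eq_swap hρ with hρ1 | hρs
  · exact Or.inl (inv_mul_eq_one.mp hρ1).symm
  · exact Or.inr (inv_mul_eq_iff_eq_mul.mp hρs)

theorem card_pedigreeIso_le (s : Fin d → TwoCycleTree (Fin n)) :
    Nat.card {t // PedigreeIso (treePedigree s) (treePedigree t)} ≤ 2 ^ d := by
  choose u v huv using fun b => (s b).2
  have hσ : ∀ t : {t // PedigreeIso (treePedigree s) (treePedigree t)}, ∃ σ,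
      IsBranchingPath 1 (fun b τ => τ * Equiv.swap (u b) (v b)) σ ∧ IsLevelIso s t σ := by
    rintro ⟨t, ht⟩
    obtain ⟨σ, hσ₀, hσ⟩ := ht.exists_isLevelIso
    exact ⟨σ, ⟨hσ₀, fun b => hσ.succ_eq_or (huv b)⟩, hσ⟩
  choose σ hσ using hσ
  calc Nat.card {t // PedigreeIso (treePedigree s) (treePedigree t)}
      ≤ Nat.card {σ // IsBranchingPath 1 (fun b τ => τ * Equiv.swap (u b) (v b)) σ} :=
        Nat.card_le_card_of_injective (fun t => ⟨σ t, (hσ t).1⟩) fun t t' htt' => by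
          have h : σ t = σ t' := congrArg Subtype.val htt'
          exact Subtype.ext ((hσ t).2.right_unique (h ▸ (hσ t').2))
    _ ≤ 2 ^ d := card_isBranchingPath_le _ _

theorem card_twoCycleTree_pow_le :
    Nat.card (TwoCycleTree (Fin n)) ^ d ≤ 2 ^ d * Nat.card (Quot (@PedigreeIso n d)) := by
  rw [← Nat.card_fin d, ← Nat.card_fun, Nat.card_fin]
  refine Nat.card_le_mul_card_of_card_fiber_le (fun s => Quot.mk _ (treePedigree s)) fun q => ?_
  rcases isEmpty_or_nonempty {s // Quot.mk _ (treePedigree s) = q} with hq | ⟨s, hs⟩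
  · simp
  have hiso : ∀ t : {t // Quot.mk _ (treePedigree t) = q},
      PedigreeIso (treePedigree s) (treePedigree t.1) := fun t =>
    pedigreeIso_equivalence.eqvGen_iff.mp (Quot.eqvGen_exact (hs.trans t.2.symm))
  refine (Nat.card_le_card_of_injective (fun t => ⟨t.1, hiso t⟩ :
      {t // Quot.mk _ (treePedigree t) = q} →
        {t // PedigreeIso (treePedigree s) (treePedigree t)})
    fun t t' h => Subtype.ext (Subtype.mk.inj h)).trans (card_pedigreeIso_le s)

end TreePedigree

theorem f_n_d_lower_bound_general (n d : ℕ) :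
    (n - 1) ^ d * n ^ (d * (n - 2)) ≤ 2 ^ d * Nat.card (Quot (@PedigreeIso n d)) :=
  calc (n - 1) ^ d * n ^ (d * (n - 2)) = ((n - 1) * n ^ (n - 2)) ^ d := by
        rw [mul_pow, ← pow_mul, mul_comm d]
    _ ≤ Nat.card (TwoCycleTree (Fin n)) ^ d :=
        Nat.pow_le_pow_left (by simpa using le_card_twoCycleTree (α := Fin n)) d
    _ ≤ 2 ^ d * Nat.card (Quot (@PedigreeIso n d)) := card_twoCycleTree_pow_le

/-- For every `n ≥ 2` and `d ≥ 1`, the number `f(n,d)` of isomorphism classes of simple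
pedigrees of depth `d` with constant population size `n` satisfies
`2^d * f(n,d) ≥ (n-1)^d * n^(d(n-2))`. -/
theorem f_n_d_lower_bound (n d : ℕ) (hn : 2 ≤ n) (hd : 1 ≤ d) :
    (n - 1) ^ d * n ^ (d * (n - 2)) ≤ 2 ^ d * Nat.card (Quot (@PedigreeIso n d)) :=
  f_n_d_lower_bound_general n d
end

section
/- Let α be a real number and for a natural number k and a natural number t define g(k, t) = (k / 2^t)·(2α − 1)^t + (1 − (2α − 1)^t)/2, a real number. Then for all natural numbers k₁, k₂ and t, writing f₁ = g(k₁, t) and f₂ = g(k₂, t), one has α·f₁·f₂ + (1/2)·(1 − f₁)·f₂ + (1/2)·f₁·(1 − f₂) + (1 − α)·(1 − f₁)·(1 − f₂) = g(k₁ + k₂, t + 1). -/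
/-- `g α k t` is the probability that the extant vertex of a complete binary pedigree of
depth `t` is in state `0` given that exactly `k` of its `2^t` founders are in state `0`,
under the symmetric two-state model with parameter `α`. -/
noncomputable def g (α : ℝ) (k t : ℕ) : ℝ :=
  ((k : ℝ) / 2 ^ t) * (2 * α - 1) ^ t + (1 - (2 * α - 1) ^ t) / 2

/-- The recurrence of the symmetric two-state model: writing `f₁ = g α k₁ t` and
`f₂ = g α k₂ t`, we have
`α f₁ f₂ + (1/2)(1-f₁)f₂ + (1/2)f₁(1-f₂) + (1-α)(1-f₁)(1-f₂) = g α (k₁+k₂) (t+1)`. -/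
theorem g_recurrence (α : ℝ) (k₁ k₂ t : ℕ) :
    α * g α k₁ t * g α k₂ t
      + (1 / 2) * (1 - g α k₁ t) * g α k₂ t
      + (1 / 2) * g α k₁ t * (1 - g α k₂ t)
      + (1 - α) * (1 - g α k₁ t) * (1 - g α k₂ t)
    = g α (k₁ + k₂) (t + 1) := by
  simp only [g, Nat.cast_add, pow_succ]
  have h2 : (2:ℝ) ^ t ≠ 0 := by positivity
  field_simp
  ring
end

section
/- Let n ≥ 2 and 1 ≤ m ≤ N be natural numbers, and let U₁, …, Uₙ be independent random subsets of {1, …, N}, each uniformly distributed on the family of all subsets of {1, …, N} of cardinality m. Let E be the event that for every i, the set U_i contains at least one element not belonging to any U_j with j ≠ i. Then P(E) ≥ 1 − n · C((n−1)m, m) / C(N, m), where C(·,·) denotes the binomial coefficient. -/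
open MeasureTheory ProbabilityTheory Finset
open scoped ENNReal

/-!
Index `i` has no private element exactly when `Uᵢ` lies in the union of the other `n - 1` sets,
which has at most `(n - 1) m` elements; so once the other sets are fixed, at most
`C((n-1)m, m)` of the `C(N, m)` equally likely values of `Uᵢ` are bad. Concretely, by
independence every tuple of `m`-sets is an atom of probability `C(N, m)⁻ⁿ`, and the bad tuples
are counted by fibring over the other coordinates. A union bound over `i` finishes.
-/

section Counting

variable {ι α : Type*} [Fintype ι] [DecidableEq ι] [DecidableEq α]

theorem card_biUnion_erase_le {T : ι → Finset α} {m : ℕ} (i : ι) (hT : ∀ j ≠ i, #(T j) ≤ m) :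
    #((univ.erase i).biUnion T) ≤ (Fintype.card ι - 1) * m := by
  calc #((univ.erase i).biUnion T) ≤ #(univ.erase i) * m :=
        card_biUnion_le_card_mul _ _ _ fun j hj => hT j (ne_of_mem_erase hj)
    _ = (Fintype.card ι - 1) * m := by rw [card_erase_of_mem (mem_univ i), card_univ]

omit [DecidableEq α] in
theorem card_piFinset_update_singleton {β : Type*} (F : Finset β) (i : ι) (b : β) :
    #(Fintype.piFinset (Function.update (fun _ => F) i {b})) = #F ^ (Fintype.card ι - 1) := by
  rw [Fintype.card_piFinset, ← Function.comp_def card, Function.comp_update,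
    prod_update_of_mem (mem_univ i)]
  simp [card_sdiff]

-- A tuple in the fibre over `R` is `R` with its `i`-th entry replaced by an `m`-subset of the
-- union of the other entries.
theorem card_filter_update_eq_le {F : Finset (Finset α)} {m : ℕ} (hF : ∀ S ∈ F, #S = m)
    {i : ι} {R : ι → Finset α} (hR : ∀ j ≠ i, #(R j) ≤ m) :
    #{T ∈ Fintype.piFinset (fun _ => F) |
        T i ⊆ (univ.erase i).biUnion T ∧ Function.update T i ∅ = R} ≤
      ((Fintype.card ι - 1) * m).choose m := by
  have hrebuild : ∀ T : ι → Finset α, Function.update (Function.update T i ∅) i (T i) = T :=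
    fun T => by rw [Function.update_idem, Function.update_eq_self]
  calc _ ≤ #(((univ.erase i).biUnion R).powersetCard m) := by
        refine card_le_card_of_injOn (· i) ?_ ?_
        · intro T hT
          obtain ⟨hTF, hTi, rfl⟩ := mem_filter.1 (mem_coe.1 hT)
          refine mem_powersetCard.2 ⟨hTi.trans_eq (biUnion_congr rfl fun j hj => ?_),
            hF _ (Fintype.mem_piFinset.1 hTF i)⟩
          simp [ne_of_mem_erase hj]
        · intro T hT T' hT' hTT'
          rw [← hrebuild T, ← hrebuild T', (mem_filter.1 (mem_coe.1 hT)).2.2,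
            (mem_filter.1 (mem_coe.1 hT')).2.2]
          exact congrArg _ hTT'
    _ ≤ ((Fintype.card ι - 1) * m).choose m := by
        rw [card_powersetCard]
        exact Nat.choose_le_choose _ (card_biUnion_erase_le i hR)

theorem card_subset_biUnion_erase_le {F : Finset (Finset α)} {m : ℕ} (hF : ∀ S ∈ F, #S = m)
    (i : ι) :
    #{T ∈ Fintype.piFinset (fun _ => F) | T i ⊆ (univ.erase i).biUnion T} ≤
      ((Fintype.card ι - 1) * m).choose m * #F ^ (Fintype.card ι - 1) := by
  rw [← card_piFinset_update_singleton F i ∅]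
  refine card_le_mul_card_image_of_maps_to (f := fun T => Function.update T i ∅) ?_ _ ?_
  · intro T hT
    refine Fintype.mem_piFinset.2 fun j => ?_
    rcases eq_or_ne j i with rfl | hj
    · simp
    · simpa [hj] using Fintype.mem_piFinset.1 (mem_filter.1 hT).1 j
  · intro R hR
    rw [filter_filter]
    refine card_filter_update_eq_le hF fun j hj => (hF _ ?_).le
    simpa [hj] using Fintype.mem_piFinset.1 hR j

theorem not_exists_private_iff_subset_biUnion_erase (T : ι → Finset α) (i : ι) :
    (¬ ∃ x ∈ T i, ∀ j, j ≠ i → x ∉ T j) ↔ T i ⊆ (univ.erase i).biUnion T := by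
  simp [subset_iff, and_comm]

end Counting

section Probability

variable {Ω ι : Type*} [MeasurableSpace Ω] {μ : Measure Ω} [Fintype ι]

theorem ProbabilityTheory.iIndepFun.measure_forall_eq {β : Type*} [MeasurableSpace β]
    [MeasurableSingletonClass β] {U : ι → Ω → β} (hU : iIndepFun U μ) (T : ι → β) :
    μ {ω | ∀ j, U j ω = T j} = ∏ j, μ {ω | U j ω = T j} := by
  simpa [Set.preimage, Set.iInter_ofPred] using
    hU.measure_inter_preimage_eq_mul univ (sets := fun j => {T j})
      fun _ _ => measurableSet_singleton _

variable {α : Type*} [DecidableEq ι] [DecidableEq α]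
  [MeasurableSpace (Finset α)] [MeasurableSingletonClass (Finset α)]
  {U : ι → Ω → Finset α} {F : Finset (Finset α)} {m : ℕ}

theorem measure_subset_biUnion_erase_le (hU : iIndepFun U μ) (hF : ∀ S ∈ F, #S = m)
    (hFne : F.Nonempty) (hrange : ∀ i ω, U i ω ∈ F)
    (hunif : ∀ i, ∀ S ∈ F, μ {ω | U i ω = S} = 1 / #F) (i : ι) :
    μ {ω | U i ω ⊆ (univ.erase i).biUnion (U · ω)} ≤
      ((Fintype.card ι - 1) * m).choose m / #F := by
  set D := {T ∈ Fintype.piFinset (fun _ : ι => F) | T i ⊆ (univ.erase i).biUnion T}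
  have hcover : {ω | U i ω ⊆ (univ.erase i).biUnion (U · ω)} ⊆
      ⋃ T ∈ D, {ω | ∀ j, U j ω = T j} := fun ω hω =>
    Set.mem_biUnion (x := (U · ω)) (mem_filter.2 ⟨Fintype.mem_piFinset.2 (hrange · ω), hω⟩)
      fun _ => rfl
  have hatom : ∀ T ∈ D, μ {ω | ∀ j, U j ω = T j} = (1 / #F) ^ Fintype.card ι := fun T hT => by
    rw [hU.measure_forall_eq, prod_congr rfl fun j _ =>
      hunif j _ (Fintype.mem_piFinset.1 (mem_filter.1 hT).1 j), prod_const, card_univ]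
  obtain ⟨k, hk⟩ := Nat.exists_eq_add_one_of_ne_zero (Fintype.card_pos_iff.2 ⟨i⟩).ne'
  have hF0 : (#F : ℝ≥0∞) ≠ 0 := by simpa using hFne.card_pos.ne'
  calc μ {ω | U i ω ⊆ (univ.erase i).biUnion (U · ω)}
      ≤ ∑ T ∈ D, μ {ω | ∀ j, U j ω = T j} :=
        (measure_mono hcover).trans (measure_biUnion_finset_le _ _)
    _ = #D * (1 / #F) ^ Fintype.card ι := by rw [sum_congr rfl hatom, sum_const, nsmul_eq_mul]
    _ ≤ ((Fintype.card ι - 1) * m).choose m * #F ^ (Fintype.card ι - 1) *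
          (1 / #F) ^ Fintype.card ι := by
      gcongr
      exact_mod_cast card_subset_biUnion_erase_le hF i
    _ = ((Fintype.card ι - 1) * m).choose m / #F := by
      have hcancel : (#F : ℝ≥0∞) ^ k * (1 / #F) ^ k = 1 := by
        rw [← mul_pow, ENNReal.mul_div_cancel hF0 (ENNReal.natCast_ne_top _), one_pow]
      rw [hk, Nat.add_sub_cancel, pow_succ, mul_assoc, ← mul_assoc (_ ^ k), hcancel, one_mul,
        mul_one_div]

theorem one_sub_le_measure_forall_exists_private [IsProbabilityMeasure μ] (hU : iIndepFun U μ)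
    (hF : ∀ S ∈ F, #S = m) (hrange : ∀ i ω, U i ω ∈ F)
    (hunif : ∀ i, ∀ S ∈ F, μ {ω | U i ω = S} = 1 / #F) :
    1 - Fintype.card ι * ((Fintype.card ι - 1) * m).choose m / #F ≤
      μ {ω | ∀ i, ∃ x ∈ U i ω, ∀ j, j ≠ i → x ∉ U j ω} := by
  set E := {ω | ∀ i, ∃ x ∈ U i ω, ∀ j, j ≠ i → x ∉ U j ω}
  obtain ⟨ω₀⟩ := nonempty_of_isProbabilityMeasure μ
  have hcover : Eᶜ ⊆ ⋃ i, {ω | U i ω ⊆ (univ.erase i).biUnion (U · ω)} := fun ω hω => by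
    obtain ⟨i, hi⟩ := not_forall.1 hω
    exact Set.mem_iUnion.2 ⟨i, (not_exists_private_iff_subset_biUnion_erase (U · ω) i).1 hi⟩
  have hcompl : μ Eᶜ ≤ Fintype.card ι * (((Fintype.card ι - 1) * m).choose m / #F) :=
    calc μ Eᶜ ≤ ∑ i, μ {ω | U i ω ⊆ (univ.erase i).biUnion (U · ω)} :=
          (measure_mono hcover).trans (measure_iUnion_fintype_le _ _)
      _ ≤ ∑ _i : ι, ((Fintype.card ι - 1) * m).choose m / (#F : ℝ≥0∞) :=
          sum_le_sum fun i _ =>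
            measure_subset_biUnion_erase_le hU hF ⟨_, hrange i ω₀⟩ hrange hunif i
      _ = _ := by rw [sum_const, card_univ, nsmul_eq_mul]
  rw [mul_div_assoc, tsub_le_iff_right]
  calc 1 = μ Set.univ := measure_univ.symm
    _ ≤ μ E + μ Eᶜ := measure_univ_le_add_compl E
    _ ≤ _ := by gcongr

end Probability

theorem prob_private_element_general (n m N : ℕ)
    {Ω : Type*} [MeasurableSpace Ω] (μ : Measure Ω) [IsProbabilityMeasure μ]
    (U : Fin n → Ω → Finset ℕ)
    (hindep : iIndepFun (m := fun _ => (⊤ : MeasurableSpace (Finset ℕ))) U μ)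
    (hrange : ∀ i ω, U i ω ⊆ Finset.Icc 1 N ∧ (U i ω).card = m)
    (hunif : ∀ i, ∀ S : Finset ℕ, S ⊆ Finset.Icc 1 N → S.card = m →
      μ {ω | U i ω = S} = 1 / (Nat.choose N m : ENNReal)) :
    1 - (n : ENNReal) * (Nat.choose ((n - 1) * m) m : ENNReal) /
        (Nat.choose N m : ENNReal) ≤
      μ {ω | ∀ i : Fin n, ∃ x ∈ U i ω, ∀ j : Fin n, j ≠ i → x ∉ U j ω} := by
  have hU : iIndepFun U μ := hindep.comp (fun _ => id) fun _ => measurable_from_top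
  have hF : #((Icc 1 N).powersetCard m) = N.choose m := by simp
  simpa [hF] using one_sub_le_measure_forall_exists_private hU
    (fun S hS => (mem_powersetCard.1 hS).2) (fun i ω => mem_powersetCard.2 (hrange i ω))
    (fun i S hS => hF ▸ hunif i S (mem_powersetCard.1 hS).1 (mem_powersetCard.1 hS).2)

/-- Let `n ≥ 2`, `1 ≤ m ≤ N`, and let `U₁, …, Uₙ` be independent random subsets of
`{1, …, N}`, each uniform on the `m`-element subsets. Let `E` be the event that every
`Uᵢ` contains an element belonging to no `Uⱼ` with `j ≠ i`. Then
`P(E) ≥ 1 - n * C((n-1)m, m) / C(N, m)`. -/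
theorem prob_private_element (n m N : ℕ) (hn : 2 ≤ n) (hm : 1 ≤ m) (hmN : m ≤ N)
    {Ω : Type*} [MeasurableSpace Ω] (μ : Measure Ω) [IsProbabilityMeasure μ]
    (U : Fin n → Ω → Finset ℕ)
    (hindep : iIndepFun (m := fun _ => (⊤ : MeasurableSpace (Finset ℕ))) U μ)
    (hrange : ∀ i ω, U i ω ⊆ Finset.Icc 1 N ∧ (U i ω).card = m)
    (hunif : ∀ i, ∀ S : Finset ℕ, S ⊆ Finset.Icc 1 N → S.card = m →
      μ {ω | U i ω = S} = 1 / (Nat.choose N m : ENNReal)) :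
    1 - (n : ENNReal) * (Nat.choose ((n - 1) * m) m : ENNReal) /
        (Nat.choose N m : ENNReal) ≤
      μ {ω | ∀ i : Fin n, ∃ x ∈ U i ω, ∀ j : Fin n, j ≠ i → x ∉ U j ω} :=
  prob_private_element_general n m N μ U hindep hrange hunif
end
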